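/- Fix d ≥ 2, let r be an arc-length parameterization of a closed curve of length 1 in ℝ^d, and let s ∈ [0, 1/2]. Then there exists t ∈ [0,1] such that ‖r(t+s) − r(t)‖ ≤ sin(πs)/π. -/

import Mathlib

/-!
Lift `r` to the unit circle and expand its coordinates in Fourier series, with coefficients
`c n ∈ ℂ^d`. By Parseval, `∫ ‖r (x + h) - r x‖² dx = ∑ (2 sin (π n h))² ‖c n‖²`, and this is at
most `h²` because `r` is 1-Lipschitz; letting `h → 0` gives `∑ (2 π n)² ‖c n‖² ≤ 1`. As
`|sin (π n s)| ≤ |n| sin (π s)`, the mean of `‖r (x + s) - r x‖²` is then at most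
`(sin (π s) / π)²`, so some chord has length at most `sin (π s) / π`.
-/

open MeasureTheory Set Real Function

noncomputable section

/-- `r` is an arc-length parameterization of a closed curve of length 1 in `ℝ^d`. -/
def IsUnitClosedCurve (d : ℕ) (r : ℝ → EuclideanSpace ℝ (Fin d)) : Prop :=
  Continuous r ∧ Periodic r 1 ∧ LipschitzWith 1 r ∧
    eVariationOn r (Icc (0:ℝ) 1) = 1

/-- The length of a shortest closed curve covering `S`. -/
def w {d : ℕ} (S : Set (EuclideanSpace ℝ (Fin d))) : ENNReal :=
  ⨅ (γ : {γ : ℝ → EuclideanSpace ℝ (Fin d) //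
      Continuous γ ∧ Periodic γ 1 ∧ S ⊆ γ '' Icc (0:ℝ) 1}),
    eVariationOn γ.1 (Icc (0:ℝ) 1)

/-- A partition of `[0,1)` into `k` measurable sets of measure `1/k` each. -/
def IsEqualPartition (k : ℕ) (A : Fin k → Set ℝ) : Prop :=
  (∀ i, MeasurableSet (A i)) ∧ Pairwise (onFun Disjoint A) ∧
    (⋃ i, A i) = Ico (0:ℝ) 1 ∧ ∀ i, volume (A i) = ENNReal.ofReal (1 / k)

def betaCurve (d k : ℕ) (r : ℝ → EuclideanSpace ℝ (Fin d)) : ENNReal :=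
  ⨅ (A : {A : Fin k → Set ℝ // IsEqualPartition k A}),
    (k : ENNReal)⁻¹ * ∑ i, w (r '' A.1 i)

def betaSup (d k : ℕ) : ENNReal :=
  ⨆ (r : {r : ℝ → EuclideanSpace ℝ (Fin d) // IsUnitClosedCurve d r}),
    betaCurve d k r.1

/-- A partition of `C` into `k` nonempty sets. -/
def IsPartitionInto {α : Type*} (k : ℕ) (S : Fin k → Set α) (C : Set α) : Prop :=
  (∀ i, (S i).Nonempty) ∧ Pairwise (onFun Disjoint S) ∧ (⋃ i, S i) = C

def gammaCurve {d : ℕ} (k : ℕ) (C : Set (EuclideanSpace ℝ (Fin d))) : ENNReal :=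
  ⨅ (S : {S : Fin k → Set (EuclideanSpace ℝ (Fin d)) // IsPartitionInto k S C}),
    ⨆ i, w (S.1 i)

def gammaSup (d k : ℕ) : ENNReal :=
  ⨆ (r : {r : ℝ → EuclideanSpace ℝ (Fin d) // IsUnitClosedCurve d r}),
    gammaCurve k (r.1 '' Icc (0:ℝ) 1)

def circlePt (t : ℝ) : EuclideanSpace ℝ (Fin 2) :=
  (EuclideanSpace.equiv (Fin 2) ℝ).symm ![Real.cos t, Real.sin t]

open AddCircle

theorem abs_sin_nat_mul_le (n : ℕ) (x : ℝ) : |sin (n * x)| ≤ n * |sin x| := by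
  induction n with
  | zero => simp
  | succ n ih =>
    calc |sin ((n + 1 : ℕ) * x)| = |sin (n * x) * cos x + cos (n * x) * sin x| := by
          push_cast; rw [add_mul, one_mul, sin_add]
      _ ≤ |sin (n * x)| * |cos x| + |cos (n * x)| * |sin x| := by
          rw [← abs_mul, ← abs_mul]; exact abs_add_le _ _
      _ ≤ n * |sin x| * 1 + 1 * |sin x| := by
          gcongr
          exacts [abs_cos_le_one x, abs_cos_le_one _]
      _ = (n + 1 : ℕ) * |sin x| := by push_cast; ring

theorem sin_int_mul_sq_le (n : ℤ) (x : ℝ) : sin (n * x) ^ 2 ≤ n ^ 2 * sin x ^ 2 := by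
  have key : ∀ m : ℕ, sin (m * x) ^ 2 ≤ m ^ 2 * sin x ^ 2 := fun m => by
    simpa only [← sq_abs (sin _), mul_pow] using
      pow_le_pow_left₀ (abs_nonneg _) (abs_sin_nat_mul_le m x) 2
  obtain ⟨m, rfl | rfl⟩ := Int.eq_nat_or_neg n
  · exact_mod_cast key m
  · simpa [neg_mul, sin_neg] using key m

theorem sum_sq_mul_le_of_sin_sq_mul_le {a : ℤ → ℝ} {C : ℝ} (u : Finset ℤ)
    (hC : ∀ h ≠ 0, ∑ n ∈ u, (2 * sin (π * n * h)) ^ 2 * a n ≤ C * h ^ 2) :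
    ∑ n ∈ u, (2 * π * n) ^ 2 * a n ≤ C := by
  -- Divide by `h²` and let `h → 0`; `sin x = x * sinc x` makes the quotient continuous at `0`.
  set F : ℝ → ℝ := fun h => ∑ n ∈ u, (2 * π * n * sinc (π * n * h)) ^ 2 * a n
  have hF : Continuous F := by fun_prop
  have hFC : ∀ h ≠ 0, F h ≤ C := fun h hh => by
    have hsin_eq : ∀ x, sin x = x * sinc x := fun x => by
      rcases eq_or_ne x 0 with rfl | hx
      · simp
      · rw [sinc_of_ne_zero hx, mul_div_cancel₀ _ hx]
    refine le_of_mul_le_mul_right ?_ (by positivity : 0 < h ^ 2)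
    calc F h * h ^ 2 = ∑ n ∈ u, (2 * sin (π * n * h)) ^ 2 * a n := by
          simp only [F, Finset.sum_mul, hsin_eq (π * _ * h)]
          refine Finset.sum_congr rfl fun n _ => by ring
      _ ≤ C * h ^ 2 := hC h hh
  have hF0 : F 0 = ∑ n ∈ u, (2 * π * n) ^ 2 * a n := by simp [F]
  rw [← hF0]
  exact le_of_tendsto (hF.tendsto 0 |>.mono_left nhdsWithin_le_nhds)
    (eventually_nhdsWithin_of_forall (s := {0}ᶜ) hFC)

theorem Function.Periodic.lipschitzWith_lift {α : Type*} [PseudoMetricSpace α] {f : ℝ → α}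
    {p : ℝ} {K : NNReal} (hf : Periodic f p) (hK : LipschitzWith K f) :
    LipschitzWith K (hf.lift : AddCircle p → α) := by
  refine LipschitzWith.of_dist_le_mul fun x y => ?_
  induction x using QuotientAddGroup.induction_on with | H t => ?_
  induction y using QuotientAddGroup.induction_on with | H u => ?_
  set k := round (p⁻¹ * (t - u))
  calc dist (hf.lift (t : AddCircle p)) (hf.lift (u : AddCircle p))
      = dist (f (t - k * p)) (f u) := by rw [hf.sub_int_mul_eq]; rfl
    _ ≤ K * dist (t - k * p) u := hK.dist_le_mul _ _
    _ = K * dist (t : AddCircle p) u := by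
        rw [dist_eq_norm, dist_eq_norm, ← QuotientAddGroup.mk_sub, AddCircle.norm_eq,
          Real.norm_eq_abs, sub_right_comm]

theorem LipschitzWith.dist_add_coe_le {α : Type*} [PseudoMetricSpace α] {p : ℝ}
    {γ : AddCircle p → α} (hγ : LipschitzWith 1 γ) (x : AddCircle p) (h : ℝ) :
    dist (γ (x + h)) (γ x) ≤ |h| :=
  calc dist (γ (x + h)) (γ x) ≤ dist (x + h) x := by simpa using hγ.dist_le_mul (x + h) x
    _ ≤ |h| := by simpa [dist_eq_norm] using QuotientAddGroup.norm_mk_le_norm (m := h)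

section Fourier

variable {T : ℝ} [Fact (0 < T)] {E : Type*} [NormedAddCommGroup E] [NormedSpace ℂ E]

theorem fourierCoeff_comp_add_right (f : AddCircle T → E) (y : AddCircle T) (n : ℤ) :
    fourierCoeff (fun x => f (x + y)) n = fourier n y • fourierCoeff f n := by
  have hshift : ∀ x, fourier (-n) (x - y) = fourier n y * fourier (-n) x := fun x => by
    simp only [fourier_apply, smul_sub, neg_smul, sub_neg_eq_add, toCircle_add, Circle.coe_mul,
      mul_comm]
  calc fourierCoeff (fun x => f (x + y)) n
      = ∫ x, fourier (-n) (x + y - y) • f (x + y) ∂haarAddCircle := by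
        simp only [fourierCoeff, add_sub_cancel_right]
    _ = ∫ x, fourier (-n) (x - y) • f x ∂haarAddCircle :=
        integral_add_right_eq_self (fun x => fourier (-n) (x - y) • f x) y
    _ = ∫ x, fourier n y • (fourier (-n) x • f x) ∂haarAddCircle := by
        simp only [hshift, mul_smul]
    _ = fourier n y • fourierCoeff f n := integral_smul _ _

theorem fourierCoeff_sub {f g : AddCircle T → E} (hf : Integrable f haarAddCircle)
    (hg : Integrable g haarAddCircle) :
    fourierCoeff (f - g) = fourierCoeff f - fourierCoeff g := by
  ext n
  simpa [fourierCoeff, smul_sub] using integral_sub (hf.fourier_smul (-n)) (hg.fourier_smul (-n))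

theorem hasSum_sq_fourierCoeff_of_continuous {f : AddCircle T → ℂ} (hf : Continuous f) :
    HasSum (fun n => ‖fourierCoeff f n‖ ^ 2) (∫ x, ‖f x‖ ^ 2 ∂haarAddCircle) := by
  have h := hasSum_sq_fourierCoeff (ContinuousMap.toLp (E := ℂ) 2 haarAddCircle ℂ ⟨f, hf⟩)
  simp only [fourierCoeff_toLp, ContinuousMap.coe_mk] at h
  convert h using 1
  refine integral_congr_ae ?_
  filter_upwards [ContinuousMap.coeFn_toLp (p := 2) (𝕜 := ℂ) haarAddCircle ⟨f, hf⟩] with x hx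
  rw [hx, ContinuousMap.coe_mk]

end Fourier

theorem norm_fourier_coe_sub_one_sq (n : ℤ) (h : ℝ) :
    ‖fourier n (h : UnitAddCircle) - 1‖ ^ 2 = (2 * sin (π * n * h)) ^ 2 := by
  have harg : 2 * (π : ℂ) * Complex.I * n * h / (1 : ℝ) = Complex.I * ↑(2 * π * n * h) := by
    push_cast; ring
  rw [fourier_coe_apply, harg, Complex.norm_exp_I_mul_ofReal_sub_one, Real.norm_eq_abs, sq_abs]
  ring_nf

theorem hasSum_sin_sq_mul_sq_fourierCoeff {g : UnitAddCircle → ℂ} (hg : Continuous g) (h : ℝ) :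
    HasSum (fun n : ℤ => (2 * sin (π * n * h)) ^ 2 * ‖fourierCoeff g n‖ ^ 2)
      (∫ x, ‖g (x + (h : UnitAddCircle)) - g x‖ ^ 2 ∂haarAddCircle) := by
  have hshift : Continuous fun x => g (x + (h : UnitAddCircle)) := hg.comp (continuous_add_const _)
  have hcoeff : ∀ n, fourierCoeff ((fun x => g (x + (h : UnitAddCircle))) - g) n
      = (fourier n (h : UnitAddCircle) - 1) * fourierCoeff g n := fun n => by
    rw [fourierCoeff_sub (hshift.integrable_of_hasCompactSupport (.of_compactSpace _))
        (hg.integrable_of_hasCompactSupport (.of_compactSpace _)),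
      Pi.sub_apply, fourierCoeff_comp_add_right, smul_eq_mul, sub_mul, one_mul]
  convert hasSum_sq_fourierCoeff_of_continuous (hshift.sub hg) using 1
  · ext n
    simp only [hcoeff, norm_mul, mul_pow, norm_fourier_coe_sub_one_sq]
  · rfl

section Curve

variable {ι : Type*} [Fintype ι]

def fourierCoeffNormSq (γ : UnitAddCircle → EuclideanSpace ℝ ι) (n : ℤ) : ℝ :=
  ∑ j, ‖fourierCoeff (fun x => (γ x j : ℂ)) n‖ ^ 2

theorem hasSum_sin_sq_mul_fourierCoeffNormSq {γ : UnitAddCircle → EuclideanSpace ℝ ι}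
    (hγ : Continuous γ) (h : ℝ) :
    HasSum (fun n : ℤ => (2 * sin (π * n * h)) ^ 2 * fourierCoeffNormSq γ n)
      (∫ x, ‖γ (x + (h : UnitAddCircle)) - γ x‖ ^ 2 ∂haarAddCircle) := by
  have hcoord : ∀ j, Continuous fun x => (γ x j : ℂ) := fun j =>
    Complex.continuous_ofReal.comp ((EuclideanSpace.proj j).continuous.comp hγ)
  have hsum := hasSum_sum fun j (_ : j ∈ Finset.univ) =>
    hasSum_sin_sq_mul_sq_fourierCoeff (hcoord j) h
  simp only [fourierCoeffNormSq, Finset.mul_sum]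
  convert hsum using 1
  rw [← integral_finsetSum _ fun j _ => ?_]
  · congr 1 with x
    simp only [EuclideanSpace.norm_sq_eq, PiLp.sub_apply, ← Complex.ofReal_sub, Complex.norm_real]
  · exact (((hcoord j).comp (continuous_add_const _)).sub (hcoord j)).norm.pow 2
      |>.integrable_of_hasCompactSupport (.of_compactSpace _)

theorem fourierCoeffNormSq_nonneg (γ : UnitAddCircle → EuclideanSpace ℝ ι) (n : ℤ) :
    0 ≤ fourierCoeffNormSq γ n :=
  Finset.sum_nonneg fun _ _ => sq_nonneg _

theorem sum_sq_mul_fourierCoeffNormSq_le_one {γ : UnitAddCircle → EuclideanSpace ℝ ι}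
    (hγ : LipschitzWith 1 γ) (u : Finset ℤ) :
    ∑ n ∈ u, (2 * π * n) ^ 2 * fourierCoeffNormSq γ n ≤ 1 := by
  refine sum_sq_mul_le_of_sin_sq_mul_le u fun h _ => ?_
  have hsum := hasSum_sin_sq_mul_fourierCoeffNormSq hγ.continuous h
  have hchord : ∀ x, ‖‖γ (x + (h : UnitAddCircle)) - γ x‖ ^ 2‖ ≤ h ^ 2 := fun x => by
    rw [norm_pow, norm_norm, ← dist_eq_norm, ← sq_abs h]
    gcongr
    exact hγ.dist_add_coe_le x h
  calc ∑ n ∈ u, (2 * sin (π * n * h)) ^ 2 * fourierCoeffNormSq γ n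
      ≤ ∫ x, ‖γ (x + (h : UnitAddCircle)) - γ x‖ ^ 2 ∂haarAddCircle :=
        sum_le_hasSum u (fun n _ => by positivity [fourierCoeffNormSq_nonneg γ n]) hsum
    _ ≤ ‖∫ x, ‖γ (x + (h : UnitAddCircle)) - γ x‖ ^ 2 ∂haarAddCircle‖ := Real.le_norm_self _
    _ ≤ h ^ 2 * haarAddCircle.real univ := norm_integral_le_of_norm_le_const (ae_of_all _ hchord)
    _ = 1 * h ^ 2 := by simp

theorem integral_norm_sub_sq_le {γ : UnitAddCircle → EuclideanSpace ℝ ι}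
    (hγ : LipschitzWith 1 γ) (s : ℝ) :
    ∫ x, ‖γ (x + (s : UnitAddCircle)) - γ x‖ ^ 2 ∂haarAddCircle ≤ (sin (π * s) / π) ^ 2 := by
  have hsum := hasSum_sin_sq_mul_fourierCoeffNormSq hγ.continuous s
  have hweight : ∀ n : ℤ, (2 * sin (π * n * s)) ^ 2 ≤ (sin (π * s) / π) ^ 2 * (2 * π * n) ^ 2 :=
    fun n => calc
      (2 * sin (π * n * s)) ^ 2 = 4 * sin (n * (π * s)) ^ 2 := by ring_nf
      _ ≤ 4 * (n ^ 2 * sin (π * s) ^ 2) := by gcongr; exact sin_int_mul_sq_le n (π * s)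
      _ = (sin (π * s) / π) ^ 2 * (2 * π * n) ^ 2 := by field_simp; ring
  rw [← hsum.tsum_eq]
  refine hsum.summable.tsum_le_of_sum_le fun u => ?_
  calc ∑ n ∈ u, (2 * sin (π * n * s)) ^ 2 * fourierCoeffNormSq γ n
      ≤ ∑ n ∈ u, (sin (π * s) / π) ^ 2 * ((2 * π * n) ^ 2 * fourierCoeffNormSq γ n) :=
        Finset.sum_le_sum fun n _ => by
          rw [← mul_assoc]
          exact mul_le_mul_of_nonneg_right (hweight n) (fourierCoeffNormSq_nonneg γ n)
    _ ≤ (sin (π * s) / π) ^ 2 * 1 := by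
        rw [← Finset.mul_sum]
        gcongr
        exact sum_sq_mul_fourierCoeffNormSq_le_one hγ u
    _ = (sin (π * s) / π) ^ 2 := mul_one _

end Curve

theorem exists_short_chord_general (d : ℕ)
    (r : ℝ → EuclideanSpace ℝ (Fin d)) (hr : IsUnitClosedCurve d r)
    (s : ℝ) (hs : s ∈ Icc (0:ℝ) (1 / 2)) :
    ∃ t ∈ Icc (0:ℝ) 1, ‖r (t + s) - r t‖ ≤ Real.sin (π * s) / π := by
  obtain ⟨-, hper, hlip, -⟩ := hr
  have hγ : LipschitzWith 1 (hper.lift : UnitAddCircle → _) := hper.lipschitzWith_lift hlip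
  obtain ⟨x, hx⟩ := exists_le_integral (μ := haarAddCircle)
    (f := fun x => ‖hper.lift (x + (s : UnitAddCircle)) - hper.lift x‖ ^ 2)
    (((hγ.continuous.comp (continuous_add_const _)).sub hγ.continuous).norm.pow 2
      |>.integrable_of_hasCompactSupport (.of_compactSpace _))
  obtain ⟨t, rfl⟩ := QuotientAddGroup.mk_surjective x
  have hchord : Periodic (fun t => ‖r (t + s) - r t‖) 1 := fun t => by
    simp only [add_right_comm t 1 s, hper _]
  obtain ⟨t₀, ht₀, heq⟩ := hchord.exists_mem_Ico₀ one_pos t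
  refine ⟨t₀, Ico_subset_Icc_self ht₀, ?_⟩
  have hsin : 0 ≤ sin (π * s) / π := div_nonneg
    (sin_nonneg_of_nonneg_of_le_pi (by nlinarith [pi_pos, hs.1]) (by nlinarith [pi_pos, hs.2]))
    pi_pos.le
  rw [← heq, ← pow_le_pow_iff_left₀ (norm_nonneg _) hsin two_ne_zero]
  exact hx.trans (integral_norm_sub_sq_le hγ s)

theorem exists_short_chord (d : ℕ) (hd : 2 ≤ d)
    (r : ℝ → EuclideanSpace ℝ (Fin d)) (hr : IsUnitClosedCurve d r)
    (s : ℝ) (hs : s ∈ Icc (0:ℝ) (1 / 2)) :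
    ∃ t ∈ Icc (0:ℝ) 1, ‖r (t + s) - r t‖ ≤ Real.sin (π * s) / π :=
  exists_short_chord_general d r hr s hs

end
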